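/- (Lemma 5, first relation: V = V_J.) For every v ∈ ℝ^S, Tv ≤ v holds if and only if T_J v ≤ v holds; that is, the feasible sets V and V_J coincide. -/
import Mathlib


noncomputable def Tval {S : Type*} [Fintype S] {A : S → Type*}
    [∀ i, Fintype (A i)] [∀ i, Nonempty (A i)]
    (r : ∀ i, A i → ℝ) (p : ∀ i, A i → S → ℝ) (lam : ℝ) (v : S → ℝ) (i : S) : ℝ :=
  Finset.univ.sup' Finset.univ_nonempty fun a : A i =>
    r i a + lam * ∑ j, p i a j * v j

noncomputable def TJ {S : Type*} [Fintype S] [DecidableEq S] {A : S → Type*}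
    [∀ i, Fintype (A i)] [∀ i, Nonempty (A i)]
    (r : ∀ i, A i → ℝ) (p : ∀ i, A i → S → ℝ) (lam : ℝ) (v : S → ℝ) (i : S) : ℝ :=
  Finset.univ.sup' Finset.univ_nonempty fun a : A i =>
    (r i a + lam * ∑ j ∈ Finset.univ.filter fun j => j ≠ i, p i a j * v j) /
      (1 - lam * p i a i)

theorem V_eq_VJ {S : Type*} [Fintype S] [Nonempty S] [DecidableEq S] {A : S → Type*}
    [∀ i, Fintype (A i)] [∀ i, Nonempty (A i)]
    (r : ∀ i, A i → ℝ) (p : ∀ i, A i → S → ℝ) (lam : ℝ)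
    (hp : ∀ i (a : A i) (j : S), 0 ≤ p i a j)
    (hp1 : ∀ i (a : A i), ∑ j, p i a j = 1)
    (hlam0 : 0 ≤ lam) (hlam1 : lam < 1) :
    ∀ v : S → ℝ, (∀ i, Tval r p lam v i ≤ v i) ↔ (∀ i, TJ r p lam v i ≤ v i) := by
  intro v
  have key : ∀ i (a : A i),
      (r i a + lam * ∑ j, p i a j * v j ≤ v i) ↔
      ((r i a + lam * ∑ j ∈ Finset.univ.filter fun j => j ≠ i, p i a j * v j) /
        (1 - lam * p i a i) ≤ v i) := by
    intro i a
    have hpii : p i a i ≤ 1 := by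
      have := hp1 i a
      have h := Finset.single_le_sum (f := fun j => p i a j)
        (fun j _ => hp i a j) (Finset.mem_univ i)
      linarith
    have hden : 0 < 1 - lam * p i a i := by
      have : lam * p i a i ≤ lam * 1 := by
        exact mul_le_mul_of_nonneg_left hpii hlam0
      linarith
    have hsplit : ∑ j, p i a j * v j =
        p i a i * v i + ∑ j ∈ Finset.univ.filter fun j => j ≠ i, p i a j * v j := by
      rw [Finset.filter_ne', ← Finset.add_sum_erase _ _ (Finset.mem_univ i)]
    rw [div_le_iff₀ hden, hsplit]
    constructor <;> intro h <;> nlinarith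
  constructor <;> intro h i <;>
    [rw [TJ]; rw [Tval]] <;> rw [Finset.sup'_le_iff] <;> intro a _
  · rw [← key]
    have := h i
    rw [Tval, Finset.sup'_le_iff] at this
    exact this a (Finset.mem_univ a)
  · rw [key]
    have := h i
    rw [TJ, Finset.sup'_le_iff] at this
    exact this a (Finset.mem_univ a)
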